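/- Suppose F, g, a : ℕ → ℕ satisfy F(b+1) ≤ 2·a(b)·(F(b)+b+1) + 5b + 8 and a(b) ≤ g(b) and g(b+2) ≥ g(b)²·g(b+1) and g(b) > 6b + 9 and g(b) > 4 for all b ≥ 3, with g strictly increasing, and F(b) < g(b+1)/2 − b for 1 ≤ b ≤ 3. Then F(b) < g(b+1)/2 − b for all b ≥ 1. -/
import Mathlib


/-- Arithmetic induction: under the stated recursive inequalities,
`F b < g (b+1) / 2 - b` for all `b ≥ 1`. -/
theorem F_lt_half_g (F g a : ℕ → ℕ)
    (hF : ∀ b : ℕ, 3 ≤ b → F (b + 1) ≤ 2 * a b * (F b + b + 1) + 5 * b + 8)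
    (hag : ∀ b : ℕ, 3 ≤ b → a b ≤ g b)
    (hgg : ∀ b : ℕ, 3 ≤ b → (g b) ^ 2 * g (b + 1) ≤ g (b + 2))
    (hg1 : ∀ b : ℕ, 3 ≤ b → 6 * b + 9 < g b)
    (hg2 : ∀ b : ℕ, 3 ≤ b → 4 < g b)
    (hmono : StrictMono g)
    (hbase : ∀ b : ℕ, 1 ≤ b → b ≤ 3 → (F b : ℚ) < (g (b + 1) : ℚ) / 2 - b) :
    ∀ b : ℕ, 1 ≤ b → (F b : ℚ) < (g (b + 1) : ℚ) / 2 - b := by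
  have main : ∀ b : ℕ, 3 ≤ b → (F b : ℚ) < (g (b + 1) : ℚ) / 2 - b := by
    intro b hb
    induction b, hb using Nat.le_induction with
    | base => exact hbase 3 (by norm_num) le_rfl
    | succ b hb ih =>
      have h1 := hF b hb
      have h2 := hag b hb
      have h3 := hgg b hb
      have h4 := hg1 b hb
      have h5 := hg2 b hb
      have h6 := hg2 (b + 1) (by omega)
      have h7 := hmono (Nat.lt_succ_self b)
      have q1 : (F (b+1) : ℚ) ≤ 2 * a b * (F b + b + 1) + 5 * b + 8 := by
        exact_mod_cast h1
      have q2 : (a b : ℚ) ≤ g b := by exact_mod_cast h2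
      have q3 : ((g b : ℚ)) ^ 2 * g (b + 1) ≤ g (b + 2) := by exact_mod_cast h3
      have q4 : (6 * b + 9 : ℚ) < g b := by exact_mod_cast h4
      have q5 : (4 : ℚ) < g b := by exact_mod_cast h5
      have q6 : (4 : ℚ) < g (b + 1) := by exact_mod_cast h6
      have q7 : (g b : ℚ) < g (b + 1) := by exact_mod_cast h7
      have ha0 : (0 : ℚ) ≤ a b := by positivity
      have hF0 : (0 : ℚ) ≤ F b := by positivity
      have hb0 : (0 : ℚ) ≤ b := by positivity
      push_cast
      nlinarith [mul_le_mul_of_nonneg_right q2 (by nlinarith : (0:ℚ) ≤ (F b : ℚ) + b + 1),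
        mul_lt_mul_of_pos_left ih (by linarith : (0:ℚ) < 2 * (g b : ℚ)),
        mul_lt_mul_of_pos_left q6 (by nlinarith : (0:ℚ) < (g b : ℚ) * ((g b : ℚ) - 4) / 2),
        mul_pos (by linarith : (0:ℚ) < (g b : ℚ)) (by linarith : (0:ℚ) < (g (b+1) : ℚ))]
  intro b hb
  rcases lt_or_ge b 3 with h | h
  · exact hbase b hb (by omega)
  · exact main b h
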